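/- arXiv:1808.03527 — 2 statements merged into one kernel-verified Lean document; each statement's English description precedes it below -/
import Mathlib

section
/- Let M be a closed Riemannian manifold, h : M → ℝ a bounded measurable function with sup |h| = c, and suppose ∫_M h ≥ 0. Then for every L > 0, the infimum of the perimeter M(∂Ω) over all Caccioppoli sets Ω ⊆ M satisfying A^h(Ω) := M(∂Ω) − ∫_Ω h ≥ L is strictly positive. -/
/-!
If the perimeters of admissible sets `Ω` (those with `A^h(Ω) ≥ L`) could be made arbitrarily
small, compactness would give a limit set `Ω∞` of perimeter zero, which by the constancy theorem
is null or conull, so that `∫_{Ω∞} h` is `0` or `∫_M h`, hence nonnegative. Since `h` is bounded,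
`∫_Ω h` is continuous in `Ω` for the measure of the symmetric difference, so passing to the limit
in `∫_Ω h ≤ per Ω - L` gives `∫_{Ω∞} h ≤ -L < 0`.
-/

open MeasureTheory Filter Topology
open scoped symmDiff

lemma exists_seq_tendsto_zero_of_forall_pos_exists_lt {α : Type*} {P : α → Prop} {f : α → ℝ}
    (hf : ∀ x, P x → 0 ≤ f x) (h : ∀ η > 0, ∃ x, P x ∧ f x < η) :
    ∃ u : ℕ → α, (∀ n, P (u n)) ∧ Tendsto (f ∘ u) atTop (𝓝 0) := by
  choose u hPu hfu using fun n : ℕ => h (1 / (n + 1)) Nat.one_div_pos_of_nat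
  exact ⟨u, hPu, squeeze_zero (fun n => hf _ (hPu n)) (fun n => (hfu n).le)
    tendsto_one_div_add_atTop_nhds_zero_nat⟩

lemma setIntegral_nonneg_of_null_or_conull {α : Type*} [MeasurableSpace α] {μ : Measure α}
    {f : α → ℝ} (hf : 0 ≤ ∫ x, f x ∂μ) {s : Set α}
    (hs : μ s = 0 ∨ μ sᶜ = 0) : 0 ≤ ∫ x in s, f x ∂μ := by
  rcases hs with hnull | hconull
  · rw [setIntegral_measure_zero f hnull]
  · rwa [setIntegral_congr_set (ae_eq_univ.mpr hconull), setIntegral_univ]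

section SetIntegral

variable {α E : Type*} [MeasurableSpace α] {μ : Measure α} [IsFiniteMeasure μ]
  [NormedAddCommGroup E] [NormedSpace ℝ E] {f : α → E} {C : ℝ}

lemma norm_setIntegral_sub_setIntegral_le (hf : Integrable f μ) (hC : ∀ x, ‖f x‖ ≤ C)
    {s t : Set α} (hs : MeasurableSet s) (ht : MeasurableSet t) :
    ‖∫ x in s, f x ∂μ - ∫ x in t, f x ∂μ‖ ≤ C * μ.real (s ∆ t) := by
  have hst : MeasurableSet (s ∆ t) := hs.symmDiff ht
  rw [← integral_indicator hs, ← integral_indicator ht,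
    ← integral_sub (hf.indicator hs) (hf.indicator ht)]
  calc ‖∫ x, (s.indicator f x - t.indicator f x) ∂μ‖
      ≤ ∫ x, ‖s.indicator f x - t.indicator f x‖ ∂μ := norm_integral_le_integral_norm _
    _ = ∫ x in s ∆ t, ‖f x‖ ∂μ := by
        rw [← integral_indicator hst]
        congr 1 with x
        rw [← Set.apply_indicator_symmDiff norm_neg, norm_indicator_eq_indicator_norm]
    _ ≤ ∫ _ in s ∆ t, C ∂μ := setIntegral_mono hf.norm.integrableOn integrableOn_const hC
    _ = C * μ.real (s ∆ t) := by rw [setIntegral_const, smul_eq_mul, mul_comm]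

lemma tendsto_setIntegral_of_tendsto_measure_symmDiff {ι : Type*} {l : Filter ι}
    (hf : Integrable f μ) (hC : ∀ x, ‖f x‖ ≤ C) {s : ι → Set α} {t : Set α}
    (hs : ∀ i, MeasurableSet (s i)) (ht : MeasurableSet t)
    (hst : Tendsto (fun i => μ (s i ∆ t)) l (𝓝 0)) :
    Tendsto (fun i => ∫ x in s i, f x ∂μ) l (𝓝 (∫ x in t, f x ∂μ)) := by
  have hreal : Tendsto (fun i => μ.real (s i ∆ t)) l (𝓝 0) :=
    (ENNReal.tendsto_toReal ENNReal.zero_ne_top).comp hst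
  rw [tendsto_iff_norm_sub_tendsto_zero]
  refine squeeze_zero (fun _ => norm_nonneg _)
    (fun i => norm_setIntegral_sub_setIntegral_le hf hC (hs i) ht) ?_
  simpa using hreal.const_mul C

end SetIntegral

/-- Let `M` be a closed Riemannian manifold (abstracted here as a finite
measure space with volume measure `μ`), `h : M → ℝ` a bounded measurable function with
`|h| ≤ c`, and suppose `∫_M h ≥ 0`.  Caccioppoli sets are modelled by a predicate `Cacc` with
perimeter functional `per`; the standard facts (compactness + lower semicontinuity of
perimeter under `L¹` convergence, and the constancy theorem) are supplied as hypotheses.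
Then for every `L > 0`, the infimum of the perimeter `per Ω` over all Caccioppoli sets `Ω`
with `A^h(Ω) = per Ω − ∫_Ω h ≥ L` is strictly positive. -/
theorem stmt0 {M : Type*} [MeasurableSpace M]
    (μ : Measure M) [IsFiniteMeasure μ]
    (Cacc : Set M → Prop) (per : Set M → ℝ)
    (h : M → ℝ) (c : ℝ) (hc : ∀ x, |h x| ≤ c) (hmeas : Measurable h)
    (hint : 0 ≤ ∫ x, h x ∂μ)
    (hCmeas : ∀ Ω, Cacc Ω → MeasurableSet Ω)
    (hpernn : ∀ Ω, Cacc Ω → 0 ≤ per Ω)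
    -- compactness of sets of finite perimeter together with
    -- lower semicontinuity of the perimeter under L¹ convergence
    (hcompact : ∀ Ω : ℕ → Set M, (∀ i, Cacc (Ω i)) → (∃ B, ∀ i, per (Ω i) ≤ B) →
      ∃ (φ : ℕ → ℕ) (Ωlim : Set M), StrictMono φ ∧ Cacc Ωlim ∧
        Tendsto (fun i => μ (symmDiff (Ω (φ i)) Ωlim)) atTop (𝓝 0) ∧
        per Ωlim ≤ Filter.liminf (fun i => per (Ω (φ i))) atTop)
    -- constancy theorem: zero perimeter forces `Ω = ∅` or `Ω = M` up to measure zero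
    (hconst : ∀ Ω, Cacc Ω → per Ω = 0 → μ Ω = 0 ∨ μ Ωᶜ = 0)
    (L : ℝ) (hL : 0 < L) :
    ∃ η > 0, ∀ Ω, Cacc Ω → L ≤ per Ω - ∫ x in Ω, h x ∂μ → η ≤ per Ω := by
  by_contra! hsmall
  obtain ⟨Ω, hΩ, hper⟩ := exists_seq_tendsto_zero_of_forall_pos_exists_lt
    (P := fun Ω => Cacc Ω ∧ L ≤ per Ω - ∫ x in Ω, h x ∂μ) (fun Ω hΩ => hpernn Ω hΩ.1)
    fun η hη => by simpa only [and_assoc] using hsmall η hη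
  obtain ⟨B, hB⟩ := hper.bddAbove_range
  obtain ⟨φ, Ωlim, hφ, hClim, hsymm, hlsc⟩ :=
    hcompact Ω (fun i => (hΩ i).1) ⟨B, fun i => hB ⟨i, rfl⟩⟩
  have hper_sub : Tendsto (fun i => per (Ω (φ i))) atTop (𝓝 0) := hper.comp hφ.tendsto_atTop
  have hper_lim : per Ωlim = 0 :=
    le_antisymm (hlsc.trans_eq hper_sub.liminf_eq) (hpernn _ hClim)
  have hh : Integrable h μ := Integrable.of_bound hmeas.aestronglyMeasurable c (ae_of_all _ hc)
  have hconv := tendsto_setIntegral_of_tendsto_measure_symmDiff hh hc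
    (fun i => hCmeas _ (hΩ (φ i)).1) (hCmeas _ hClim) hsymm
  have hlim_le : ∫ x in Ωlim, h x ∂μ ≤ 0 - L :=
    le_of_tendsto_of_tendsto' hconv (hper_sub.sub_const L) fun i => by linarith [(hΩ (φ i)).2]
  have hlim_nonneg := setIntegral_nonneg_of_null_or_conull hint (hconst _ hClim hper_lim)
  linarith
end

section
/- Let V, V* be n-varifolds in a closed manifold M such that V* ⌊(M∖K) = V ⌊(M∖K) for a compact set K, and suppose V* = lim_i |∂Ω_i*|, V = lim_i |∂Ω_i| as varifolds, where for each i: Ω_i △ Ω_i* ⊆ K and A^h(Ω_i) − ε_i ≤ A^h(Ω_i*) ≤ A^h(Ω_i) with ε_i → 0, sup|h| = c. Then |‖V‖(M) − ‖V*‖(M)| ≤ c·vol(K). -/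
/-!
Since `Ω_i` and `Ω_i*` agree off `K`, their `h`-volumes differ by at most `c · vol(K)`; the
almost-minimality `A^h(Ω_i) − ε_i ≤ A^h(Ω_i*) ≤ A^h(Ω_i)` therefore pins `M(∂Ω_i) − M(∂Ω_i*)`
to within `c · vol(K) + |ε_i|`, and the estimate survives the limit `i → ∞`.
-/

open MeasureTheory Filter Topology

lemma Set.abs_indicator_sub_indicator_le_indicator {α : Type*} {f : α → ℝ} {c : ℝ}
    {s t K : Set α} (hst : symmDiff s t ⊆ K) (hfK : ∀ x ∈ K, |f x| ≤ c) (x : α) :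
    |s.indicator f x - t.indicator f x| ≤ K.indicator (fun _ => c) x := by
  by_cases hxK : x ∈ K
  · rw [Set.indicator_of_mem hxK]
    refine le_trans ?_ (hfK x hxK)
    by_cases hxs : x ∈ s <;> by_cases hxt : x ∈ t <;> simp [hxs, hxt]
  · have hiff : x ∈ s ↔ x ∈ t := by
      by_contra hne
      exact hxK (hst (Set.mem_symmDiff.2 (by tauto)))
    by_cases hxs : x ∈ s <;> simp [hxs, hiff.1, hiff.not.1, hxK]

namespace MeasureTheory

variable {α : Type*} [MeasurableSpace α] {μ : Measure α}

lemma abs_setIntegral_sub_setIntegral_le {f : α → ℝ} {c : ℝ} {s t K : Set α}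
    (hs : MeasurableSet s) (ht : MeasurableSet t) (hK : MeasurableSet K) (hμK : μ K ≠ ⊤)
    (hfs : IntegrableOn f s μ) (hft : IntegrableOn f t μ)
    (hst : symmDiff s t ⊆ K) (hfK : ∀ x ∈ K, |f x| ≤ c) :
    |(∫ x in s, f x ∂μ) - ∫ x in t, f x ∂μ| ≤ c * μ.real K := by
  have hfs' : Integrable (s.indicator f) μ := (integrable_indicator_iff hs).2 hfs
  have hft' : Integrable (t.indicator f) μ := (integrable_indicator_iff ht).2 hft
  rw [← integral_indicator hs, ← integral_indicator ht, ← integral_sub hfs' hft']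
  calc |∫ x, (s.indicator f x - t.indicator f x) ∂μ|
      ≤ ∫ x, |s.indicator f x - t.indicator f x| ∂μ := abs_integral_le_integral_abs
    _ ≤ ∫ x, K.indicator (fun _ => c) x ∂μ :=
        integral_mono (hfs'.sub hft').abs ((integrableOn_const hμK).integrable_indicator hK)
          (Set.abs_indicator_sub_indicator_le_indicator hst hfK)
    _ = c * μ.real K := by rw [integral_indicator_const c hK, smul_eq_mul, mul_comm]

end MeasureTheory

lemma abs_le_of_tendsto_of_abs_le_add {ι : Type*} {l : Filter ι} [l.NeBot] {u ε : ι → ℝ}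
    {a B : ℝ} (hu : Tendsto u l (𝓝 a)) (hε : Tendsto ε l (𝓝 0)) (h : ∀ i, |u i| ≤ B + |ε i|) :
    |a| ≤ B := by
  have hB : Tendsto (fun i => B + |ε i|) l (𝓝 B) := by
    simpa using tendsto_const_nhds.add hε.abs
  exact le_of_tendsto_of_tendsto' hu.abs hB h

/-- replacement mass-defect estimate.  Let `V, V*` be `n`-varifolds in a
closed manifold `M` (a finite measure space) with `V* = lim |∂Ω_i*|`, `V = lim |∂Ω_i|` as
varifolds, so that the total masses converge: `M(∂Ω_i) → ‖V‖(M)` and `M(∂Ω_i*) → ‖V*‖(M)`.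
Suppose for each `i`: `Ω_i △ Ω_i* ⊆ K` for a (compact) set `K`, and
`A^h(Ω_i) − ε_i ≤ A^h(Ω_i*) ≤ A^h(Ω_i)` with `ε_i → 0` and `sup|h| ≤ c`.  Then
`|‖V‖(M) − ‖V*‖(M)| ≤ c · vol(K)`. -/
theorem stmt12 {M : Type*} [MeasurableSpace M] (μ : Measure M) [IsFiniteMeasure μ]
    (h : M → ℝ) (c : ℝ) (hc : ∀ x, |h x| ≤ c) (hmeas : Measurable h)
    (K : Set M) (hK : MeasurableSet K)
    (Ω Ωstar : ℕ → Set M)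
    (hΩm : ∀ i, MeasurableSet (Ω i)) (hΩstarm : ∀ i, MeasurableSet (Ωstar i))
    (per perstar : ℕ → ℝ) (mV mVstar : ℝ) (ε : ℕ → ℝ)
    (hsymm : ∀ i, symmDiff (Ω i) (Ωstar i) ⊆ K)
    (hA : ∀ i,
      (per i - ∫ x in Ω i, h x ∂μ) - ε i
          ≤ perstar i - ∫ x in Ωstar i, h x ∂μ ∧
      perstar i - ∫ x in Ωstar i, h x ∂μ
          ≤ per i - ∫ x in Ω i, h x ∂μ)
    (hε : Tendsto ε atTop (𝓝 0))
    (hper : Tendsto per atTop (𝓝 mV))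
    (hperstar : Tendsto perstar atTop (𝓝 mVstar)) :
    |mV - mVstar| ≤ c * (μ K).toReal := by
  rw [← measureReal_def]
  have hint : Integrable h μ :=
    .of_bound hmeas.aestronglyMeasurable c (.of_forall fun x => hc x)
  have hvol : ∀ i, |(∫ x in Ω i, h x ∂μ) - ∫ x in Ωstar i, h x ∂μ| ≤ c * μ.real K := fun i =>
    abs_setIntegral_sub_setIntegral_le (hΩm i) (hΩstarm i) hK (measure_ne_top μ K)
      hint.integrableOn hint.integrableOn (hsymm i) fun x _ => hc x
  refine abs_le_of_tendsto_of_abs_le_add (hper.sub hperstar) hε fun i => ?_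
  obtain ⟨hlower, hupper⟩ := hA i
  obtain ⟨hvol_lower, hvol_upper⟩ := abs_le.1 (hvol i)
  rw [abs_le]
  constructor <;> linarith [le_abs_self (ε i), neg_abs_le (ε i)]
end
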